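/- arXiv:1304.3502 — 8 statements merged into one kernel-verified Lean document; each statement's English description precedes it below -/
import Mathlib

section
/- Let Y and X be Polish spaces and let f : Y → X be a continuous open surjection. Then for every comeager subset C of Y, the image f[C] is comeager in X. -/
/-!
Fix a countable basis of `Y` and a dense open `U ⊆ Y`. For a basic open `V`, the open set
`f '' (V ∩ U)` is dense in `f '' V`, so off the nowhere dense boundary of `f '' (V ∩ U)` every fibre
meeting `V` also meets `V ∩ U`. Hence for comeager many `x` the trace of `U` is dense in the fibre
`f ⁻¹' {x}`. If `C` contains the intersection of countably many dense open `U`, then for comeager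
many `x` all these traces are dense, and the Baire category theorem in the Polish fibre yields a
point of `C` over `x`.
-/

open Set Filter TopologicalSpace

theorem dense_union_compl_closure {X : Type*} [TopologicalSpace X] (s : Set X) :
    Dense (s ∪ (closure s)ᶜ) := fun x => by
  by_cases hx : x ∈ closure s
  · exact closure_mono subset_union_left hx
  · exact subset_closure (Or.inr hx)

theorem IsOpenMap.eventually_fiber_subset_closure_inter {X Y : Type*} [TopologicalSpace X]
    [TopologicalSpace Y] [SecondCountableTopology Y] {f : Y → X} (hopen : IsOpenMap f)
    (hcont : Continuous f) {U : Set Y} (hUo : IsOpen U) (hUd : Dense U) :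
    ∀ᶠ x in residual X, f ⁻¹' {x} ⊆ closure (f ⁻¹' {x} ∩ U) := by
  obtain ⟨b, hbc, -, hb⟩ := exists_countable_basis Y
  have hgeneric : ∀ V ∈ b, ∀ᶠ x in residual X,
      x ∈ f '' (V ∩ U) ∪ (closure (f '' (V ∩ U)))ᶜ := fun V hV =>
    residual_of_dense_open ((hopen _ ((hb.isOpen hV).inter hUo)).union isClosed_closure.isOpen_compl)
      (dense_union_compl_closure _)
  filter_upwards [(eventually_countable_ball hbc).2 hgeneric] with x hx y hy
  rw [hb.mem_closure_iff]
  intro V hV hyV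
  have hx_closure : x ∈ closure (f '' (V ∩ U)) := image_closure_subset_closure_image hcont
    ⟨y, hUd.open_subset_closure_inter (hb.isOpen hV) hyV, hy⟩
  obtain ⟨z, ⟨hzV, hzU⟩, hzx⟩ := (hx V hV).resolve_right (not_not_intro hx_closure)
  exact ⟨z, hzV, hzx, hzU⟩

theorem stmt1 {X Y : Type*} [TopologicalSpace X] [PolishSpace X]
    [TopologicalSpace Y] [PolishSpace Y]
    (f : Y → X) (hcont : Continuous f) (hopen : IsOpenMap f)
    (hsurj : Function.Surjective f)
    (C : Set Y) (hC : C ∈ residual Y) : f '' C ∈ residual X := by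
  obtain ⟨S, hSo, hSd, hSc, hSC⟩ := mem_residual_iff.1 hC
  have hfibres : ∀ᶠ x in residual X, ∀ U ∈ S, f ⁻¹' {x} ⊆ closure (f ⁻¹' {x} ∩ U) :=
    (eventually_countable_ball hSc).2 fun U hU =>
      hopen.eventually_fiber_subset_closure_inter hcont (hSo U hU) (hSd U hU)
  filter_upwards [hfibres] with x hx
  have : PolishSpace (f ⁻¹' {x}) := (isClosed_singleton.preimage hcont).polishSpace
  obtain ⟨y₀, hy₀⟩ := hsurj x
  have : Nonempty (f ⁻¹' {x}) := ⟨⟨y₀, hy₀⟩⟩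
  have hdense : Dense (⋂ U ∈ S, ((↑) : f ⁻¹' {x} → Y) ⁻¹' U) :=
    dense_biInter_of_isOpen (fun U hU => (hSo U hU).preimage continuous_subtype_val) hSc
      fun U hU => Subtype.dense_iff.2 (by rw [Subtype.image_preimage_coe]; exact hx U hU)
  obtain ⟨⟨y, hy⟩, hyS⟩ := hdense.nonempty
  exact ⟨y, hSC (mem_sInter.2 fun U hU => mem_iInter₂.1 hyS U hU), hy⟩
end

section
/- Let E, F, and R be equivalence relations on Polish spaces X, Y, and Z respectively, and suppose that F is generically R-ergodic. Suppose there is a Baire measurable function f : Y → X such that (i) f(x) E f(y) whenever x F y, and (ii) for every comeager subset C of Y there are x, y ∈ C with f(x) not E-equivalent to f(y). Then E is not Borel reducible to R. -/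
open Filter Topology

/-- A function is Baire measurable if the preimage of every open set is Baire measurable. -/
def BaireMeasurableFun {X Y : Type*} [TopologicalSpace X] [TopologicalSpace Y]
    (f : X → Y) : Prop :=
  ∀ U : Set Y, IsOpen U → BaireMeasurableSet (f ⁻¹' U)

/-- `E` is generically `R`-ergodic. -/
def GenericallyErgodic {X Z : Type*} [TopologicalSpace X] [TopologicalSpace Z]
    (E : X → X → Prop) (R : Z → Z → Prop) : Prop :=
  ∀ g : X → Z, BaireMeasurableFun g → (∀ x y, E x y → R (g x) (g y)) →
    ∃ C ∈ residual X, ∀ x ∈ C, ∀ y ∈ C, R (g x) (g y)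

/-- `E` is Borel reducible to `R`: there is a Borel measurable function `g` with
`x E y ↔ g x R g y`. -/
def BorelReducible {X Z : Type*} [TopologicalSpace X] [TopologicalSpace Z]
    (E : X → X → Prop) (R : Z → Z → Prop) : Prop :=
  ∃ g : X → Z, @Measurable X Z (borel X) (borel Z) g ∧ ∀ x y, E x y ↔ R (g x) (g y)

lemma BaireMeasurableFun.measurable {X Y : Type*} [TopologicalSpace X] [TopologicalSpace Y]
    {f : X → Y} (hf : BaireMeasurableFun f) :
    @Measurable X Y (eventuallyMeasurableSpace (borel X) (residual X)) (borel Y) f :=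
  @measurable_generateFrom _ _ (eventuallyMeasurableSpace _ _) _ _ fun U hU => hf U hU

lemma Measurable.comp_baireMeasurableFun {X Y Z : Type*} [TopologicalSpace X]
    [TopologicalSpace Y] [TopologicalSpace Z] {g : Y → Z} {f : X → Y}
    (hg : @Measurable Y Z (borel Y) (borel Z) g) (hf : BaireMeasurableFun f) :
    BaireMeasurableFun (g ∘ f) :=
  fun _ hU => (hg.comp hf.measurable) (MeasurableSpace.measurableSet_generateFrom hU)

theorem stmt2_general {X Y Z : Type*}
    [TopologicalSpace X] [TopologicalSpace Y]
    [TopologicalSpace Z]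
    (E : X → X → Prop) (F : Y → Y → Prop) (R : Z → Z → Prop)
    (hFR : GenericallyErgodic F R)
    (f : Y → X) (hf : BaireMeasurableFun f)
    (h1 : ∀ x y, F x y → E (f x) (f y))
    (h2 : ∀ C ∈ residual Y, ∃ x ∈ C, ∃ y ∈ C, ¬ E (f x) (f y)) :
    ¬ BorelReducible E R := by
  rintro ⟨g, hg, hgE⟩
  obtain ⟨C, hC, hCR⟩ := hFR (g ∘ f) (hg.comp_baireMeasurableFun hf)
    fun x y hxy => (hgE _ _).mp (h1 x y hxy)
  obtain ⟨x, hx, y, hy, hxy⟩ := h2 C hC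
  exact hxy ((hgE _ _).mpr (hCR x hx y hy))

theorem stmt2 {X Y Z : Type*}
    [TopologicalSpace X] [PolishSpace X] [TopologicalSpace Y] [PolishSpace Y]
    [TopologicalSpace Z] [PolishSpace Z]
    (E : X → X → Prop) (F : Y → Y → Prop) (R : Z → Z → Prop)
    (hE : Equivalence E) (hF : Equivalence F) (hR : Equivalence R)
    (hFR : GenericallyErgodic F R)
    (f : Y → X) (hf : BaireMeasurableFun f)
    (h1 : ∀ x y, F x y → E (f x) (f y))
    (h2 : ∀ C ∈ residual Y, ∃ x ∈ C, ∃ y ∈ C, ¬ E (f x) (f y)) :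
    ¬ BorelReducible E R :=
  stmt2_general E F R hFR f hf h1 h2
end

section
/- Let R be an equivalence relation on a Polish space Z. If the relation of ℓ¹-equivalence on ℝ^ℕ is generically R-ergodic, then the relation of ℓ¹-equivalence on (0,1)^ℕ is generically R-ergodic. -/
open Filter Topology

/-- ℓ¹-equivalence of sequences of real numbers. -/
def l1EquivR (s t : ℕ → ℝ) : Prop :=
  Summable fun n => |s n - t n|

/-- ℓ¹-equivalence of sequences in `(0,1)^ℕ`. -/
def l1Equiv (s t : ℕ → Set.Ioo (0 : ℝ) 1) : Prop :=
  Summable fun n => |(s n : ℝ) - (t n : ℝ)|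

/-! The sigmoid `x ↦ 1 / (1 + e^{-x})` is a `1`-Lipschitz homeomorphism `ℝ ≃ₜ (0,1)`. Applied
coordinatewise it gives a homeomorphism `ℝ^ℕ ≃ₜ (0,1)^ℕ` mapping `ℓ¹`-equivalent sequences to
`ℓ¹`-equivalent ones, and generic ergodicity transfers along such a homeomorphism because
homeomorphisms preserve Baire measurability and comeager sets. -/

section GenericErgodicity

variable {X Y Z : Type*} [TopologicalSpace X] [TopologicalSpace Y] [TopologicalSpace Z]

theorem BaireMeasurableFun.comp_isOpenMap {f : Y → Z} (hf : BaireMeasurableFun f) {φ : X → Y}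
    (hc : Continuous φ) (ho : IsOpenMap φ) : BaireMeasurableFun (f ∘ φ) :=
  fun U hU => (hf U hU).preimage hc ho

theorem GenericallyErgodic.of_homeomorph {E : X → X → Prop} {F : Y → Y → Prop}
    {R : Z → Z → Prop} (Φ : X ≃ₜ Y) (hΦ : ∀ x y, E x y → F (Φ x) (Φ y))
    (h : GenericallyErgodic E R) : GenericallyErgodic F R := by
  intro g hg hinv
  obtain ⟨C, hC, hCR⟩ := h (g ∘ Φ) (hg.comp_isOpenMap Φ.continuous Φ.isOpenMap)
    fun x y hxy => hinv _ _ (hΦ x y hxy)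
  refine ⟨Φ '' C, Φ.residual_map_eq ▸ image_mem_map hC, ?_⟩
  rintro _ ⟨x, hx, rfl⟩ _ ⟨y, hy, rfl⟩
  exact hCR x hx y hy

end GenericErgodicity

theorem LipschitzWith.l1EquivR_comp {K : NNReal} {f : ℝ → ℝ} (hf : LipschitzWith K f)
    {s t : ℕ → ℝ} (h : l1EquivR s t) : l1EquivR (f ∘ s) (f ∘ t) := by
  unfold l1EquivR at h ⊢
  refine Summable.of_nonneg_of_le (fun n => abs_nonneg _) (fun n => ?_) (h.mul_left (K : ℝ))
  simpa only [Function.comp_apply, Real.dist_eq] using hf.dist_le_mul (s n) (t n)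

namespace Real

theorem lipschitzWith_sigmoid : LipschitzWith 1 sigmoid := by
  refine lipschitzWith_of_nnnorm_deriv_le differentiable_sigmoid fun x => ?_
  rw [deriv_sigmoid, ← NNReal.coe_le_coe, coe_nnnorm, NNReal.coe_one, Real.norm_eq_abs,
    abs_of_pos (mul_pos (sigmoid_pos x) (sub_pos.2 (sigmoid_lt_one x)))]
  nlinarith [sigmoid_pos x, sigmoid_lt_one x]

noncomputable def sigmoidHomeomorph : ℝ ≃ₜ Set.Ioo (0 : ℝ) 1 :=
  (IsEmbedding.subtypeVal.comp isEmbedding_sigmoid).toHomeomorph.trans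
    (Homeomorph.setCongr range_sigmoid)

end Real

theorem stmt5_general {Z : Type*} [TopologicalSpace Z]
    (R : Z → Z → Prop)
    (h : GenericallyErgodic l1EquivR R) :
    GenericallyErgodic l1Equiv R :=
  h.of_homeomorph (Homeomorph.piCongrRight fun _ => Real.sigmoidHomeomorph)
    -- `l1Equiv (Φ s) (Φ t)` unfolds to `l1EquivR (sigmoid ∘ s) (sigmoid ∘ t)`
    fun _ _ hst => Real.lipschitzWith_sigmoid.l1EquivR_comp hst

theorem stmt5 {Z : Type*} [TopologicalSpace Z] [PolishSpace Z]
    (R : Z → Z → Prop) (hR : Equivalence R)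
    (h : GenericallyErgodic l1EquivR R) :
    GenericallyErgodic l1Equiv R :=
  stmt5_general R h
end

section
/- If X is a nonmeager subset of (0,1)^ℕ (with the product topology), then there is an uncountable subset Y of X such that for every pair of distinct points s, t of Y one has sup_{n ∈ ℕ} |s_n − t_n| ≥ 1/4. -/
/-!
Take, by Zorn's lemma, a maximal subset `M ⊆ X` whose points are pairwise at sup-distance
at least `1/4`. By maximality every point of `X` lies in the closed box
`∏ₙ {a : |a - yₙ| ≤ 1/4}` around some `y ∈ M`. Such a box is closed and has empty interior,
since a basic open set constrains only finitely many coordinates and a free coordinate can be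
moved more than `1/4` away from `yₙ` inside `(0,1)`. So if `M` were countable, `X` would be
meagre.
-/

open Set

theorem exists_maximal_pairwise_subset {α : Type*} {r : α → α → Prop} (hr : ∀ x y, r x y → r y x)
    (X : Set α) : ∃ M ⊆ X, M.Pairwise r ∧ ∀ x ∈ X, x ∉ M → ∃ y ∈ M, ¬ r x y := by
  obtain ⟨M, ⟨hMX, hMr⟩, hmax⟩ := zorn_subset {Y | Y ⊆ X ∧ Y.Pairwise r} fun c hc hchain =>
    ⟨⋃₀ c, ⟨sUnion_subset fun Y hY => (hc hY).1, hchain.pairwise_sUnion.2 fun Y hY => (hc hY).2⟩,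
      fun _ => subset_sUnion_of_mem⟩
  refine ⟨M, hMX, hMr, fun x hx hxM => ?_⟩
  by_contra! hxr
  have hins : insert x M ∈ {Y | Y ⊆ X ∧ Y.Pairwise r} :=
    ⟨insert_subset hx hMX, pairwise_insert.2 ⟨hMr, fun y hy _ => ⟨hxr y hy, hr x y (hxr y hy)⟩⟩⟩
  exact hxM (hmax hins (subset_insert x M) (mem_insert x M))

theorem interior_pi_univ_eq_empty {ι : Type*} [Infinite ι] {A : ι → Type*}
    [∀ i, TopologicalSpace (A i)] {K : ∀ i, Set (A i)} (hK : ∀ i, K i ≠ univ) :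
    interior (pi univ K) = ∅ := by
  classical
  refine eq_empty_iff_forall_notMem.2 fun f hf => ?_
  obtain ⟨I, u, hu, hIu⟩ := isOpen_pi_iff.1 isOpen_interior f hf
  obtain ⟨i, hi⟩ := I.exists_notMem
  obtain ⟨a, ha⟩ := ne_univ_iff_exists_notMem _ |>.1 (hK i)
  have hupdate : Function.update f i a ∈ (I : Set ι).pi u := fun j hj => by
    rw [Function.update_of_ne (ne_of_mem_of_not_mem hj hi)]
    exact (hu j hj).2
  have := interior_subset (hIu hupdate) i (mem_univ i)
  rw [Function.update_self] at this
  exact ha this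

theorem exists_lt_abs_sub_of_lt_half (a : Ioo (0 : ℝ) 1) {r : ℝ} (hr : r < 1 / 2) :
    ∃ b : Ioo (0 : ℝ) 1, r < |(b : ℝ) - a| := by
  wlog hr₀ : 0 ≤ r generalizing r
  · obtain ⟨b, hb⟩ := this (r := 0) (by norm_num) le_rfl
    exact ⟨b, (not_le.1 hr₀).trans hb⟩
  obtain ⟨ha₀, ha₁⟩ := a.2
  rcases le_or_gt (a : ℝ) (1 / 2) with ha | ha
  · refine ⟨⟨(1 + a + r) / 2, by constructor <;> linarith⟩, ?_⟩
    rw [abs_of_nonneg] <;> dsimp only <;> linarith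
  · refine ⟨⟨(a - r) / 2, by constructor <;> linarith⟩, ?_⟩
    rw [abs_of_nonpos] <;> dsimp only <;> linarith

theorem isNowhereDense_pi_abs_sub_le {ι : Type*} [Infinite ι] (y : ι → Ioo (0 : ℝ) 1) {r : ℝ}
    (hr : r < 1 / 2) :
    IsNowhereDense (pi univ fun i => {a : Ioo (0 : ℝ) 1 | |(a : ℝ) - y i| ≤ r}) :=
  (isClosed_set_pi fun i _ => isClosed_le (continuous_subtype_val.sub continuous_const).abs
    continuous_const).isNowhereDense_iff.2 <| interior_pi_univ_eq_empty fun i => by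
      obtain ⟨b, hb⟩ := exists_lt_abs_sub_of_lt_half (y i) hr
      exact ne_univ_iff_exists_notMem _ |>.2 ⟨b, not_le.2 hb⟩

theorem abs_sub_le_iSup_abs_sub {ι : Type*} (s t : ι → Ioo (0 : ℝ) 1) (i : ι) :
    |(s i : ℝ) - t i| ≤ ⨆ j, |(s j : ℝ) - t j| := by
  refine le_ciSup (f := fun j => |(s j : ℝ) - t j|) ⟨1, ?_⟩ i
  rintro _ ⟨j, rfl⟩
  obtain ⟨hs₀, hs₁⟩ := (s j).2
  obtain ⟨ht₀, ht₁⟩ := (t j).2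
  exact abs_le.2 ⟨by linarith, by linarith⟩

theorem stmt6 (X : Set (ℕ → Set.Ioo (0 : ℝ) 1)) (hX : ¬ IsMeagre X) :
    ∃ Y ⊆ X, ¬ Y.Countable ∧
      ∀ s ∈ Y, ∀ t ∈ Y, s ≠ t → (1 : ℝ) / 4 ≤ ⨆ n, |(s n : ℝ) - (t n : ℝ)| := by
  obtain ⟨M, hMX, hMr, hmax⟩ :=
    exists_maximal_pairwise_subset (r := fun s t => (1 : ℝ) / 4 ≤ ⨆ n, |(s n : ℝ) - (t n : ℝ)|)
      (fun s t h => by simpa only [abs_sub_comm] using h) X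
  refine ⟨M, hMX, fun hMc => hX ?_, hMr⟩
  refine (isMeagre_biUnion hMc fun y _ =>
    (isNowhereDense_pi_abs_sub_le y (r := 1 / 4) (by norm_num)).isMeagre).mono fun x hx => ?_
  by_cases hxM : x ∈ M
  · exact mem_biUnion hxM (mem_univ_pi.2 fun n => by simp)
  · obtain ⟨y, hyM, hxy⟩ := hmax x hx hxM
    exact mem_biUnion hyM <| mem_univ_pi.2 fun n =>
      (abs_sub_le_iSup_abs_sub x y n).trans (not_le.1 hxy).le
end

section
/- For every η ∈ (0,1] and every ε > 0 there is δ > 0 such that the following holds: for every unital C*-algebra A, all positive contractions x, b ∈ A with ‖b‖ ≥ η, and every μ ∈ ℂ, if ‖(exp(ix) − μ·1)b‖ ≤ δ then there exists λ ∈ ℂ with ‖(x − λ·1)b‖ ≤ ε. -/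
/-!
By Jordan's inequality a chord of the unit circle subtending an arc of length at most `π` is at
least `2/π` times the arc. Choose `t₀ ∈ [-1, 1]` with `exp (i t₀)` closest to `μ`; then every
`t ∈ [-1, 1]` satisfies `|t - t₀| ≤ π |exp (i t) - μ|`. As `x` is selfadjoint with spectrum in
`[-1, 1]`, the continuous functional calculus turns this into
`(x - t₀)² ≤ π² |exp (i x) - μ|²`, and conjugating by `b` gives
`‖(x - t₀) b‖ ≤ π ‖(exp (i x) - μ) b‖`. Hence `δ = ε / π` works.
-/

open Complex
open scoped Real

lemma abs_le_pi_div_two_mul_norm_exp_I_mul_sub_one {θ : ℝ} (hθ : |θ| ≤ π) :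
    |θ| ≤ π / 2 * ‖exp (I * θ) - 1‖ := by
  have hjordan := Real.mul_abs_le_abs_sin (x := θ / 2) (by rw [abs_div, abs_two]; linarith)
  rw [norm_exp_I_mul_ofReal_sub_one, Real.norm_eq_abs, abs_mul, abs_two]
  rw [abs_div, abs_two] at hjordan
  have := Real.pi_pos
  field_simp at hjordan ⊢
  linarith

lemma abs_sub_le_pi_mul_norm_exp_I_mul_sub {s t : ℝ} (μ : ℂ) (hst : |t - s| ≤ π)
    (hs : ‖exp (I * s) - μ‖ ≤ ‖exp (I * t) - μ‖) :
    |t - s| ≤ π * ‖exp (I * t) - μ‖ := by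
  have hchord : ‖exp (I * t) - exp (I * s)‖ = ‖exp (I * ↑(t - s)) - 1‖ := by
    rw [← one_mul ‖_ - 1‖, ← norm_exp_I_mul_ofReal s, ← norm_mul, mul_sub, ← Complex.exp_add,
      mul_one]
    push_cast; ring_nf
  calc |t - s| ≤ π / 2 * ‖exp (I * t) - exp (I * s)‖ := by
        rw [hchord]; exact abs_le_pi_div_two_mul_norm_exp_I_mul_sub_one hst
    _ ≤ π / 2 * (‖exp (I * t) - μ‖ + ‖exp (I * s) - μ‖) := by
        gcongr; simpa only [dist_eq_norm] using dist_triangle_right _ _ μ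
    _ ≤ π * ‖exp (I * t) - μ‖ := by
        have := Real.pi_pos; nlinarith

section NonUnital

variable {A : Type*} [NonUnitalCStarAlgebra A] [PartialOrder A] [StarOrderedRing A]

lemma CStarRing.norm_mul_le_norm_mul_of_star_mul_self_le {c e : A}
    (h : star c * c ≤ star e * e) (b : A) : ‖c * b‖ ≤ ‖e * b‖ := by
  have hconj : star (c * b) * (c * b) ≤ star (e * b) * (e * b) := by
    simpa only [star_mul, mul_assoc] using star_left_conjugate_le_conjugate h b
  have := CStarAlgebra.norm_le_norm_of_nonneg_of_le (star_mul_self_nonneg _) hconj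
  rw [CStarRing.norm_star_mul_self, CStarRing.norm_star_mul_self] at this
  exact (mul_self_le_mul_self_iff (norm_nonneg _) (norm_nonneg _)).2 this

end NonUnital

section Unital

variable {A : Type*} [CStarAlgebra A]

lemma NormedSpace.exp_smul_eq_cfc (c : ℂ) (a : A) [IsStarNormal a] :
    NormedSpace.exp (c • a) = cfc (fun z => Complex.exp (c * z)) a := by
  rw [← CFC.complex_exp_eq_normedSpace_exp, ← cfc_comp_smul c Complex.exp a]
  rfl

variable [PartialOrder A] [StarOrderedRing A]

open scoped ComplexOrder in
lemma norm_cfc_mul_le_norm_cfc_mul {a : A} [IsStarNormal a] {f g : ℂ → ℂ}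
    (hf : ContinuousOn f (spectrum ℂ a)) (hg : ContinuousOn g (spectrum ℂ a))
    (hfg : ∀ z ∈ spectrum ℂ a, ‖f z‖ ≤ ‖g z‖) (b : A) :
    ‖cfc f a * b‖ ≤ ‖cfc g a * b‖ := by
  refine CStarRing.norm_mul_le_norm_mul_of_star_mul_self_le ?_ b
  rw [← cfc_star, ← cfc_star, ← cfc_mul _ _ a hf.star hf, ← cfc_mul _ _ a hg.star hg]
  refine cfc_mono (fun z hz => ?_) (hf.star.mul hf) (hg.star.mul hg)
  simp only [Complex.star_def, Complex.conj_mul']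
  exact_mod_cast pow_le_pow_left₀ (norm_nonneg _) (hfg z hz) 2

lemma IsSelfAdjoint.exists_norm_sub_smul_one_mul_le {x : A} (hx : IsSelfAdjoint x)
    (hx1 : ‖x‖ ≤ 1) (μ : ℂ) :
    ∃ t₀ : ℝ, ∀ b : A, ‖(x - (t₀ : ℂ) • (1 : A)) * b‖
      ≤ π * ‖(NormedSpace.exp (I • x) - μ • (1 : A)) * b‖ := by
  nontriviality A
  have := hx.isStarNormal
  obtain ⟨t₀, ht₀, hmin⟩ :=
    isCompact_Icc.exists_isMinOn (Set.nonempty_Icc.2 (by norm_num : (-1 : ℝ) ≤ 1))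
    (by fun_prop : Continuous fun t : ℝ => ‖Complex.exp (I * (t : ℂ)) - μ‖).continuousOn
  have hbound : ∀ z ∈ spectrum ℂ x, ‖z - t₀‖ ≤ ‖π * (Complex.exp (I * z) - μ)‖ := by
    intro z hz
    have hre : |z.re| ≤ 1 :=
      (abs_re_le_norm z).trans ((spectrum.norm_le_norm_of_mem hz).trans hx1)
    have hmem : z.re ∈ Set.Icc (-1 : ℝ) 1 := abs_le.1 hre
    rw [hx.mem_spectrum_eq_re hz, norm_mul, norm_real, Real.norm_of_nonneg Real.pi_pos.le,
      ← ofReal_sub, norm_real, Real.norm_eq_abs]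
    refine abs_sub_le_pi_mul_norm_exp_I_mul_sub μ ?_ (hmin hmem)
    rw [abs_le] at hre ⊢
    constructor <;> linarith [ht₀.1, ht₀.2, Real.pi_gt_three]
  refine ⟨t₀, fun b => ?_⟩
  have := norm_cfc_mul_le_norm_cfc_mul (a := x) (by fun_prop) (by fun_prop) hbound b
  rwa [cfc_sub _ _ x, cfc_id' ℂ x, cfc_const _ x, cfc_const_mul _ _ x, cfc_sub _ _ x, cfc_const μ x,
    ← NormedSpace.exp_smul_eq_cfc, Algebra.algebraMap_eq_smul_one, Algebra.algebraMap_eq_smul_one,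
    smul_mul_assoc, norm_smul, norm_real, Real.norm_of_nonneg Real.pi_pos.le] at this

end Unital

theorem stmt7_general (η : ℝ) (ε : ℝ) (hε : 0 < ε) :
    ∃ δ > (0 : ℝ),
      ∀ (A : Type) [CStarAlgebra A] [PartialOrder A] [StarOrderedRing A],
        ∀ x b : A, 0 ≤ x → ‖x‖ ≤ 1 → 0 ≤ b → ‖b‖ ≤ 1 → η ≤ ‖b‖ →
          ∀ μ : ℂ, ‖(NormedSpace.exp (Complex.I • x) - μ • (1 : A)) * b‖ ≤ δ →
            ∃ lam : ℂ, ‖(x - lam • (1 : A)) * b‖ ≤ ε := by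
  refine ⟨ε / π, by positivity, fun A _ _ _ x b hx hx1 _ _ _ μ hμ => ?_⟩
  obtain ⟨t₀, ht₀⟩ := (IsSelfAdjoint.of_nonneg hx).exists_norm_sub_smul_one_mul_le hx1 μ
  refine ⟨t₀, (ht₀ b).trans ?_⟩
  calc π * ‖(NormedSpace.exp (I • x) - μ • (1 : A)) * b‖ ≤ π * (ε / π) := by
        gcongr
    _ = ε := mul_div_cancel₀ ε Real.pi_pos.ne'

theorem stmt7 (η : ℝ) (hη : η ∈ Set.Ioc (0 : ℝ) 1) (ε : ℝ) (hε : 0 < ε) :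
    ∃ δ > (0 : ℝ),
      ∀ (A : Type) [CStarAlgebra A] [PartialOrder A] [StarOrderedRing A],
        ∀ x b : A, 0 ≤ x → ‖x‖ ≤ 1 → 0 ≤ b → ‖b‖ ≤ 1 → η ≤ ‖b‖ →
          ∀ μ : ℂ, ‖(NormedSpace.exp (Complex.I • x) - μ • (1 : A)) * b‖ ≤ δ →
            ∃ lam : ℂ, ‖(x - lam • (1 : A)) * b‖ ≤ ε :=
  stmt7_general η ε hε
end

section
/- Let A be a C*-algebra, let (a_i)_{i∈ℕ} be a sequence that is dense in the closed unit ball of A, and let (x_n)_{n∈ℕ} be a sequence of positive contractions in A satisfying x_n x_m = 0 for all n ≠ m and ‖x_n a_i − a_i x_n‖ ≤ 2^{−n} for all i ≤ n. Let t : ℕ → [−1,1]. For each n set σ_n = ∑_{k=1}^{n} t_k x_k and u_n = exp(iσ_n), a unitary element of the unitization Ã of A. Then there exists a *-algebra automorphism α of A such that for every a ∈ A, ‖α(a) − u_n a u_n*‖ → 0 as n → ∞ (where u_n a u_n* is computed in à and lies in A, since A is an ideal in Ã). -/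
/-
Write `σ m n = ∑_{m ≤ k < n} t k • x k` and `u n = exp (i σ 0 n)`. Orthogonality makes `σ 0 m`
and `σ m n` commute, so `u n = u m * exp (i σ m n)` for `m ≤ n`, and as `‖σ m n‖ ≤ 1`,
`‖u n b u n⋆ - u m b u m⋆‖ = ‖[exp (i σ m n), b]‖ ≤ e ‖[σ m n, b]‖`. The commutation hypothesis
gives `‖[σ m n, a i]‖ ≤ 2 ^ (1 - m)` for `i ≤ m`, and density extends the smallness of these
commutators to every `b`. Hence `Ad (u n)` converges pointwise on `A` to a ⋆-endomorphism; running
the same argument with `-t`, which replaces `u n` by `u n⋆`, produces its inverse.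
-/

open Filter Topology NormedSpace Unitary

section Commutator

open scoped Nat

variable {𝔸 : Type*} [NormedRing 𝔸]

theorem norm_pow_mul_sub_mul_pow_le (z b : 𝔸) (n : ℕ) :
    ‖z ^ n * b - b * z ^ n‖ ≤ n * ‖z‖ ^ (n - 1) * ‖z * b - b * z‖ := by
  rcases Nat.eq_zero_or_pos n with rfl | hn
  · simp
  induction n, hn using Nat.le_induction with
  | base => simp
  | succ n hn ih =>
    have hsplit : z ^ (n + 1) * b - b * z ^ (n + 1) =
        z * (z ^ n * b - b * z ^ n) + (z * b - b * z) * z ^ n := by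
      rw [pow_succ']
      noncomm_ring
    obtain ⟨k, rfl⟩ : ∃ k, n = k + 1 := ⟨n - 1, by omega⟩
    calc ‖z ^ (k + 1 + 1) * b - b * z ^ (k + 1 + 1)‖
        ≤ ‖z‖ * ‖z ^ (k + 1) * b - b * z ^ (k + 1)‖ + ‖z * b - b * z‖ * ‖z ^ (k + 1)‖ := by
          rw [hsplit]; exact norm_add_le_of_le (norm_mul_le _ _) (norm_mul_le _ _)
      _ ≤ ‖z‖ * ((k + 1 : ℕ) * ‖z‖ ^ k * ‖z * b - b * z‖)
            + ‖z * b - b * z‖ * ‖z‖ ^ (k + 1) := by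
          gcongr
          · exact ih
          · exact norm_pow_le' z hn
      _ = (k + 1 + 1 : ℕ) * ‖z‖ ^ (k + 1 + 1 - 1) * ‖z * b - b * z‖ := by
          push_cast; ring

theorem norm_exp_mul_sub_mul_exp_le [NormedAlgebra ℚ 𝔸] [CompleteSpace 𝔸] (z b : 𝔸) :
    ‖exp z * b - b * exp z‖ ≤ Real.exp ‖z‖ * ‖z * b - b * z‖ := by
  have hexp := exp_series_hasSum_exp' (𝕂 := ℚ) z
  have hcomm : HasSum (fun n => (n !⁻¹ : ℚ) • (z ^ n * b - b * z ^ n))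
      (exp z * b - b * exp z) := by
    simpa only [smul_sub, smul_mul_assoc, mul_smul_comm] using
      (hexp.mul_right b).sub (hexp.mul_left b)
  have hmajor : HasSum (fun n : ℕ => (n ! : ℝ)⁻¹ * (n * ‖z‖ ^ (n - 1))) (Real.exp ‖z‖) := by
    have hexp_real : HasSum (fun n : ℕ => ‖z‖ ^ n / n !) (Real.exp ‖z‖) := by
      rw [Real.exp_eq_exp_ℝ]; exact expSeries_div_hasSum_exp ‖z‖
    refine (hasSum_nat_add_iff' 1).mp ?_
    have hshift (n : ℕ) :
        ((n + 1 : ℕ) ! : ℝ)⁻¹ * ((n + 1 : ℕ) * ‖z‖ ^ (n + 1 - 1)) = ‖z‖ ^ n / n ! := by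
      rw [Nat.factorial_succ]
      push_cast
      field_simp
    simpa only [hshift, Finset.range_one, Finset.sum_singleton, Nat.cast_zero, zero_mul,
      mul_zero, sub_zero] using hexp_real
  refine hcomm.norm_le_of_bounded (hmajor.mul_right _) fun n => ?_
  rw [norm_smul, mul_assoc, ← Rat.norm_cast_real]
  push_cast
  rw [norm_inv, Real.norm_natCast]
  gcongr
  exact norm_pow_mul_sub_mul_pow_le z b n

end Commutator

open Complex in
theorem norm_conj_exp_add_sub_conj_exp_le {B : Type*} [CStarAlgebra B] {h k : B}
    (hh : IsSelfAdjoint h) (hk : IsSelfAdjoint k) (hhk : Commute h k) (b : B) :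
    ‖exp (I • (h + k)) * b * star (exp (I • (h + k))) - exp (I • h) * b * star (exp (I • h))‖
      ≤ Real.exp ‖k‖ * ‖k * b - b * k‖ := by
  -- Mathlib's lemmas about `exp` are stated for normed `ℚ`-algebras
  let +nondep : NormedAlgebra ℚ B := .restrictScalars ℚ ℂ B
  have hu : exp (I • h) ∈ unitary B :=
    exp_mem_unitary_of_mem_skewAdjoint (hh.smul_mem_skewAdjoint conj_I)
  have hv : exp (I • k) ∈ unitary B :=
    exp_mem_unitary_of_mem_skewAdjoint (hk.smul_mem_skewAdjoint conj_I)
  have hadd : exp (I • (h + k)) = exp (I • h) * exp (I • k) := by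
    rw [smul_add]; exact exp_add_of_commute ((hhk.smul_left I).smul_right I)
  set u := exp (I • h)
  set v := exp (I • k)
  have hconj : exp (I • (h + k)) * b * star (exp (I • (h + k))) - u * b * star u =
      u * ((v * b - b * v) * star v) * star u := by
    rw [hadd, star_mul, sub_mul, mul_assoc b, Unitary.mul_star_self_of_mem hv]
    noncomm_ring
  rw [hconj, CStarRing.norm_mul_mem_unitary _ (Unitary.star_mem hu),
    CStarRing.norm_mem_unitary_mul _ hu, CStarRing.norm_mul_mem_unitary _ (Unitary.star_mem hv)]
  calc ‖v * b - b * v‖ ≤ Real.exp ‖I • k‖ * ‖(I • k) * b - b * (I • k)‖ :=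
        norm_exp_mul_sub_mul_exp_le _ _
    _ = Real.exp ‖k‖ * ‖k * b - b * k‖ := by
        rw [smul_mul_assoc, mul_smul_comm, ← smul_sub, norm_smul, norm_smul, norm_I, one_mul,
          one_mul]

open Complex in
theorem star_exp_I_smul {B : Type*} [CStarAlgebra B] {h : B} (hh : IsSelfAdjoint h) :
    star (exp (I • h)) = exp (I • -h) := by
  rw [star_exp, star_smul, hh.star_eq, star_def, conj_I, neg_smul, smul_neg]

theorem Finset.sum_mul_sum_eq_sum_mul_self {ι R : Type*} [NonUnitalNonAssocSemiring R]
    {F : Finset ι} {y : ι → R} (h : ∀ i ∈ F, ∀ j ∈ F, i ≠ j → y i * y j = 0) :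
    (∑ i ∈ F, y i) * ∑ i ∈ F, y i = ∑ i ∈ F, y i * y i := by
  rw [Finset.sum_mul_sum]
  exact Finset.sum_congr rfl fun i hi =>
    Finset.sum_eq_single_of_mem i hi fun j hj hji => h i hi j hj hji.symm

section PositiveContraction

variable {A : Type*} [NonUnitalCStarAlgebra A] [PartialOrder A] [StarOrderedRing A]

theorem mul_self_le_self_of_nonneg_of_norm_le_one {y : A} (hy : 0 ≤ y) (hy1 : ‖y‖ ≤ 1) :
    y * y ≤ y := by
  calc y * y = cfcₙ (fun r : ℝ => r * r) y := by rw [cfcₙ_mul _ _ y, cfcₙ_id' ℝ y]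
    _ ≤ cfcₙ (fun r : ℝ => r) y := cfcₙ_mono fun r hr => by
        have h0 : 0 ≤ r := quasispectrum_nonneg_of_nonneg y hy r hr
        have h1 : r ≤ 1 := (Real.le_norm_self r).trans
          ((NonUnitalIsometricContinuousFunctionalCalculus.norm_quasispectrum_le y hr).trans hy1)
        nlinarith
    _ = y := cfcₙ_id' ℝ y

theorem IsSelfAdjoint.norm_mul_norm_le_of_mul_self_le {s q : A} (hs : IsSelfAdjoint s)
    (hsq : s * s ≤ q) : ‖s‖ * ‖s‖ ≤ ‖q‖ := by
  have hss : 0 ≤ s * s := by simpa only [hs.star_eq] using star_mul_self_nonneg s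
  rw [← CStarRing.norm_star_mul_self, hs.star_eq]
  exact CStarAlgebra.norm_le_norm_of_nonneg_of_le hss hsq

theorem norm_sum_smul_le_one_of_orthogonal {ι : Type*} (x : ι → A) (t : ι → ℝ) (F : Finset ι)
    (hx_pos : ∀ n, 0 ≤ x n) (hx_norm : ∀ n, ‖x n‖ ≤ 1)
    (hx_orth : ∀ m n, m ≠ n → x m * x n = 0) (ht : ∀ n, |t n| ≤ 1) :
    ‖∑ k ∈ F, t k • x k‖ ≤ 1 := by
  have hx_sa k : IsSelfAdjoint (x k) := .of_nonneg (hx_pos k)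
  have hxx k : 0 ≤ x k * x k := by simpa only [(hx_sa k).star_eq] using star_mul_self_nonneg (x k)
  set s := ∑ k ∈ F, t k • x k
  set q := ∑ k ∈ F, x k
  have hq : ‖q‖ ≤ 1 := by
    have hqq : q * q ≤ q := by
      rw [Finset.sum_mul_sum_eq_sum_mul_self fun i _ j _ hij => hx_orth i j hij]
      exact Finset.sum_le_sum fun k _ =>
        mul_self_le_self_of_nonneg_of_norm_le_one (hx_pos k) (hx_norm k)
    have := (isSelfAdjoint_sum F fun k _ => hx_sa k).norm_mul_norm_le_of_mul_self_le hqq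
    nlinarith [norm_nonneg q]
  have hss : s * s ≤ q := by
    rw [Finset.sum_mul_sum_eq_sum_mul_self fun i _ j _ hij => by
      rw [smul_mul_smul_comm, hx_orth i j hij, smul_zero]]
    refine Finset.sum_le_sum fun k _ => ?_
    rw [smul_mul_smul_comm]
    have ht2 : t k * t k ≤ 1 := by nlinarith [abs_le.mp (ht k)]
    calc (t k * t k) • (x k * x k) ≤ x k * x k := smul_le_of_le_one_left (hxx k) ht2
      _ ≤ x k := mul_self_le_self_of_nonneg_of_norm_le_one (hx_pos k) (hx_norm k)
  have hs : IsSelfAdjoint s :=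
    isSelfAdjoint_sum F fun k _ => (IsSelfAdjoint.all (t k)).smul (hx_sa k)
  have := hs.norm_mul_norm_le_of_mul_self_le hss
  nlinarith [norm_nonneg s]

end PositiveContraction

theorem norm_mul_sub_mul_le {R : Type*} [NonUnitalSeminormedRing R] (s b c : R) :
    ‖s * b - b * s‖ ≤ ‖s * c - c * s‖ + 2 * ‖s‖ * ‖b - c‖ := by
  have hsplit : s * b - b * s = (s * c - c * s) + (s * (b - c) - (b - c) * s) := by noncomm_ring
  calc ‖s * b - b * s‖ ≤ ‖s * c - c * s‖ + (‖s * (b - c)‖ + ‖(b - c) * s‖) := by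
        rw [hsplit]; exact norm_add_le_of_le le_rfl (norm_sub_le _ _)
    _ ≤ ‖s * c - c * s‖ + (‖s‖ * ‖b - c‖ + ‖b - c‖ * ‖s‖) := by
        gcongr <;> exact norm_mul_le _ _
    _ = ‖s * c - c * s‖ + 2 * ‖s‖ * ‖b - c‖ := by ring

section PartialSum

variable {A : Type*} [NonUnitalCStarAlgebra A]

noncomputable def partialSum (t : ℕ → ℝ) (x : ℕ → A) (m n : ℕ) : A :=
  ∑ k ∈ Finset.Ico m n, t k • x k

variable {t : ℕ → ℝ} {x : ℕ → A}

theorem partialSum_add {m n p : ℕ} (hmn : m ≤ n) (hnp : n ≤ p) :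
    partialSum t x m n + partialSum t x n p = partialSum t x m p :=
  Finset.sum_Ico_consecutive _ hmn hnp

theorem partialSum_neg (m n : ℕ) : partialSum (-t) x m n = -partialSum t x m n := by
  simp only [partialSum, Pi.neg_apply, neg_smul, Finset.sum_neg_distrib]

theorem isSelfAdjoint_partialSum (hx : ∀ k, IsSelfAdjoint (x k)) (m n : ℕ) :
    IsSelfAdjoint (partialSum t x m n) :=
  isSelfAdjoint_sum _ fun k _ => (IsSelfAdjoint.all (t k)).smul (hx k)

theorem partialSum_mul_partialSum_eq_zero (hx_orth : ∀ m n, m ≠ n → x m * x n = 0)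
    {m n m' n' : ℕ} (h : n ≤ m' ∨ n' ≤ m) :
    partialSum t x m n * partialSum t x m' n' = 0 := by
  rw [partialSum, partialSum, Finset.sum_mul_sum]
  refine Finset.sum_eq_zero fun j hj => Finset.sum_eq_zero fun k hk => ?_
  rw [Finset.mem_Ico] at hj hk
  rw [smul_mul_smul_comm, hx_orth j k (by omega), smul_zero]

theorem commute_partialSum (hx_orth : ∀ m n, m ≠ n → x m * x n = 0) {m n m' n' : ℕ}
    (h : n ≤ m') : Commute (partialSum t x m n) (partialSum t x m' n') :=
  (partialSum_mul_partialSum_eq_zero hx_orth (.inl h)).trans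
    (partialSum_mul_partialSum_eq_zero hx_orth (.inr h)).symm

theorem norm_commutator_partialSum_le (ht : ∀ n, |t n| ≤ 1) {b : A} {m : ℕ}
    (hb : ∀ k, m ≤ k → ‖x k * b - b * x k‖ ≤ ((2 : ℝ) ^ k)⁻¹) (n : ℕ) :
    ‖partialSum t x m n * b - b * partialSum t x m n‖ ≤ 2 * ((2 : ℝ) ^ m)⁻¹ := by
  have hsum : partialSum t x m n * b - b * partialSum t x m n =
      ∑ k ∈ Finset.Ico m n, t k • (x k * b - b * x k) := by
    simp only [partialSum, Finset.sum_mul, Finset.mul_sum, ← Finset.sum_sub_distrib,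
      smul_mul_assoc, mul_smul_comm, smul_sub]
  have hgeom := geom_sum_Ico_le_of_lt_one (x := (2 : ℝ)⁻¹) (m := m) (n := n)
    (by norm_num) (by norm_num)
  rw [hsum]
  calc _ ≤ ∑ k ∈ Finset.Ico m n, ((2 : ℝ) ^ k)⁻¹ := norm_sum_le_of_le _ fun k hk => by
        rw [norm_smul, Real.norm_eq_abs]
        exact (mul_le_mul (ht k) (hb k (Finset.mem_Ico.mp hk).1) (norm_nonneg _)
          zero_le_one).trans_eq (one_mul _)
    _ ≤ 2 * ((2 : ℝ) ^ m)⁻¹ := by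
        simp only [inv_pow] at hgeom
        norm_num at hgeom
        linarith

theorem exists_forall_norm_commutator_partialSum_lt (a : ℕ → A)
    (ha_dense : ∀ b : A, ‖b‖ ≤ 1 → ∀ ε > (0 : ℝ), ∃ i, ‖b - a i‖ < ε)
    (hx_comm : ∀ n i, i ≤ n → ‖x n * a i - a i * x n‖ ≤ ((2 : ℝ) ^ n)⁻¹)
    (ht : ∀ n, |t n| ≤ 1) (hS : ∀ m n, ‖partialSum t x m n‖ ≤ 1) (b : A) {ε : ℝ} (hε : 0 < ε) :
    ∃ N, ∀ n, ‖partialSum t x N n * b - b * partialSum t x N n‖ < ε := by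
  set r := ‖b‖ + 1
  have hr : 0 < r := by positivity
  have hb : b = r • r⁻¹ • b := by rw [smul_smul, mul_inv_cancel₀ hr.ne', one_smul]
  have hb_norm : ‖r⁻¹ • b‖ ≤ 1 := by
    rw [norm_smul, norm_inv, Real.norm_of_nonneg hr.le, inv_mul_le_one₀ hr]
    linarith
  obtain ⟨i, hi⟩ := ha_dense _ hb_norm (ε / (4 * r)) (by positivity)
  obtain ⟨N, hN⟩ := exists_pow_lt_of_lt_one (show 0 < ε / (4 * r) by positivity)
    (show (2 : ℝ)⁻¹ < 1 by norm_num)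
  refine ⟨max i N, fun n => ?_⟩
  set S := partialSum t x (max i N) n
  have hpow : ((2 : ℝ) ^ max i N)⁻¹ < ε / (4 * r) := by
    rw [← inv_pow]
    exact (pow_le_pow_of_le_one (by norm_num) (by norm_num) (le_max_right i N)).trans_lt hN
  have hcomm : ‖S * a i - a i * S‖ ≤ 2 * ((2 : ℝ) ^ max i N)⁻¹ :=
    norm_commutator_partialSum_le ht (fun k hk => hx_comm k i ((le_max_left i N).trans hk)) n
  have hrest : 2 * ‖S‖ * ‖r⁻¹ • b - a i‖ ≤ 2 * ‖r⁻¹ • b - a i‖ := by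
    have := hS (max i N) n
    gcongr
    linarith
  calc ‖S * b - b * S‖ = r * ‖S * (r⁻¹ • b) - (r⁻¹ • b) * S‖ := by
        conv_lhs => rw [hb]
        rw [mul_smul_comm, smul_mul_assoc, ← smul_sub, norm_smul, Real.norm_of_nonneg hr.le]
    _ ≤ r * (‖S * a i - a i * S‖ + 2 * ‖S‖ * ‖r⁻¹ • b - a i‖) := by
        gcongr; exact norm_mul_sub_mul_le _ _ _
    _ < r * (ε / r) := by
        have h4 : 4 * (ε / (4 * r)) = ε / r := by field_simp
        gcongr
        linarith
    _ = ε := by field_simp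

end PartialSum

section ConjugationByExp

variable {A : Type*} [NonUnitalCStarAlgebra A] {t : ℕ → ℝ} {x : ℕ → A}

open Complex in
theorem exists_tendsto_conj_exp_partialSum (hx_sa : ∀ k, IsSelfAdjoint (x k))
    (hx_orth : ∀ m n, m ≠ n → x m * x n = 0) (hS : ∀ m n, ‖partialSum t x m n‖ ≤ 1) {b : A}
    (hb : ∀ ε > 0, ∃ N, ∀ n, ‖partialSum t x N n * b - b * partialSum t x N n‖ < ε) :
    ∃ c : A, Tendsto (fun n => exp (I • ((partialSum t x 0 n : A) : Unitization ℂ A)) * b *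
      star (exp (I • ((partialSum t x 0 n : A) : Unitization ℂ A)))) atTop (𝓝 c) := by
  set w : ℕ → Unitization ℂ A := fun n =>
    exp (I • ((partialSum t x 0 n : A) : Unitization ℂ A)) * b *
      star (exp (I • ((partialSum t x 0 n : A) : Unitization ℂ A)))
  -- `A` is an ideal of its unitization
  have hw n : ∃ c : A, (c : Unitization ℂ A) = w n :=
    ⟨(w n).snd, Unitization.ext (by simp [w, Unitization.fst_mul]) rfl⟩
  choose c hc using hw
  have hdist {m n : ℕ} (hmn : m ≤ n) :
      dist (c n) (c m) ≤ Real.exp 1 * ‖partialSum t x m n * b - b * partialSum t x m n‖ := by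
    have hsa k l : IsSelfAdjoint ((partialSum t x k l : A) : Unitization ℂ A) :=
      (isSelfAdjoint_partialSum hx_sa k l).inr ℂ
    have hcomm :
        Commute ((partialSum t x 0 m : A) : Unitization ℂ A) (partialSum t x m n : A) := by
      simp only [Commute, SemiconjBy, ← Unitization.inr_mul,
        (commute_partialSum hx_orth le_rfl).eq]
    rw [dist_eq_norm, ← Unitization.norm_inr (𝕜 := ℂ), Unitization.inr_sub, hc, hc]
    simp only [w]
    rw [← partialSum_add (Nat.zero_le m) hmn, Unitization.inr_add]
    refine (norm_conj_exp_add_sub_conj_exp_le (hsa 0 m) (hsa m n) hcomm b).trans ?_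
    rw [← Unitization.inr_mul, ← Unitization.inr_mul, ← Unitization.inr_sub,
      Unitization.norm_inr, Unitization.norm_inr]
    gcongr
    exact hS m n
  have hcauchy : CauchySeq c := Metric.cauchySeq_iff'.mpr fun ε hε => by
    obtain ⟨N, hN⟩ := hb (ε / Real.exp 1) (by positivity)
    refine ⟨N, fun n hn => (hdist hn).trans_lt ?_⟩
    rw [← lt_div_iff₀' (Real.exp_pos 1)]
    exact hN n
  obtain ⟨c_lim, hc_lim⟩ := cauchySeq_tendsto_of_complete hcauchy
  refine ⟨c_lim, ?_⟩
  rw [show w = fun n => (c n : Unitization ℂ A) from funext fun n => (hc n).symm]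
  exact (Unitization.isometry_inr.continuous.tendsto c_lim).comp hc_lim

end ConjugationByExp

section ConjugationLimit

variable {ι : Type*} {l : Filter ι}
variable {S B : Type*} [NormedRing B] [StarRing B] [CStarRing B] [SMul S B] [IsScalarTower S B B]
  [SMulCommClass S B B]

theorem norm_conjStarAlgAut_apply (u : unitary B) (y : B) : ‖conjStarAlgAut S B u y‖ = ‖y‖ := by
  rw [conjStarAlgAut_apply, CStarRing.norm_mul_mem_unitary _ (Unitary.star_mem u.prop),
    CStarRing.norm_mem_unitary_mul _ u.prop]

theorem tendsto_conjStarAlgAut_star {u : ι → unitary B} {b y : B}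
    (h : Tendsto (fun i => conjStarAlgAut S B (u i) b) l (𝓝 y)) :
    Tendsto (fun i => conjStarAlgAut S B (star (u i)) y) l (𝓝 b) := by
  rw [tendsto_iff_norm_sub_tendsto_zero] at h ⊢
  convert h using 2 with i
  rw [← norm_conjStarAlgAut_apply (S := S) (u i), map_sub, ← conjStarAlgAut_symm,
    StarAlgEquiv.apply_symm_apply, norm_sub_rev]

variable {A : Type*} [NonUnitalCStarAlgebra A]

theorem exists_nonUnitalStarAlgHom_tendsto_conj [l.NeBot] (u : ι → unitary (Unitization ℂ A))
    (h : ∀ b : A, ∃ c : A,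
      Tendsto (fun i => conjStarAlgAut ℂ _ (u i) b) l (𝓝 (c : Unitization ℂ A))) :
    ∃ φ : A →⋆ₙₐ[ℂ] A, ∀ b : A,
      Tendsto (fun i => conjStarAlgAut ℂ _ (u i) b) l (𝓝 (φ b : Unitization ℂ A)) := by
  choose φ hφ using h
  have hlim {b c : A}
      (hc : Tendsto (fun i => conjStarAlgAut ℂ _ (u i) b) l (𝓝 (c : Unitization ℂ A))) :
      φ b = c :=
    Unitization.inr_injective (tendsto_nhds_unique (hφ b) hc)
  refine ⟨{
    toFun := φ
    map_smul' r b := hlim <| by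
      simpa only [Unitization.inr_smul, map_smul, MonoidHom.id_apply] using (hφ b).const_smul r
    map_zero' := hlim <| by
      simpa only [Unitization.inr_zero, map_zero] using tendsto_const_nhds
    map_add' b c := hlim <| by
      simpa only [Unitization.inr_add, map_add] using (hφ b).add (hφ c)
    map_mul' b c := hlim <| by
      simpa only [Unitization.inr_mul, map_mul] using (hφ b).mul (hφ c)
    map_star' b := hlim <| by
      simpa only [Unitization.inr_star, map_star] using (hφ b).star }, hφ⟩

theorem exists_starAlgEquiv_tendsto_conj [l.NeBot] (u : ι → unitary (Unitization ℂ A))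
    (h : ∀ b : A, ∃ c : A,
      Tendsto (fun i => conjStarAlgAut ℂ _ (u i) b) l (𝓝 (c : Unitization ℂ A)))
    (h_star : ∀ b : A, ∃ c : A,
      Tendsto (fun i => conjStarAlgAut ℂ _ (star (u i)) b) l (𝓝 (c : Unitization ℂ A))) :
    ∃ α : A ≃⋆ₐ[ℂ] A, ∀ b : A,
      Tendsto (fun i => conjStarAlgAut ℂ _ (u i) b) l (𝓝 (α b : Unitization ℂ A)) := by
  obtain ⟨φ, hφ⟩ := exists_nonUnitalStarAlgHom_tendsto_conj u h
  obtain ⟨ψ, hψ⟩ := exists_nonUnitalStarAlgHom_tendsto_conj (star u) h_star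
  have hψφ : Function.LeftInverse ψ φ := fun b => Unitization.inr_injective
    (tendsto_nhds_unique (hψ (φ b)) (tendsto_conjStarAlgAut_star (hφ b)))
  have hφψ : Function.RightInverse ψ φ := fun b =>
    Unitization.inr_injective (tendsto_nhds_unique (hφ (ψ b))
      (by simpa only [Pi.star_apply, star_star] using tendsto_conjStarAlgAut_star (hψ b)))
  exact ⟨.ofBijective φ ⟨hψφ.injective, hφψ.surjective⟩, hφ⟩

end ConjugationLimit

theorem stmt8_general {A : Type*} [NonUnitalCStarAlgebra A] [PartialOrder A] [StarOrderedRing A]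
    (a : ℕ → A)
    (ha_dense : ∀ b : A, ‖b‖ ≤ 1 → ∀ ε > (0 : ℝ), ∃ i, ‖b - a i‖ < ε)
    (x : ℕ → A) (hx_pos : ∀ n, 0 ≤ x n) (hx_norm : ∀ n, ‖x n‖ ≤ 1)
    (hx_orth : ∀ m n, m ≠ n → x m * x n = 0)
    (hx_comm : ∀ n i, i ≤ n → ‖x n * a i - a i * x n‖ ≤ ((2 : ℝ) ^ n)⁻¹)
    (t : ℕ → ℝ) (ht : ∀ n, |t n| ≤ 1) :
    ∃ α : A ≃⋆ₐ[ℂ] A, ∀ b : A,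
      Tendsto (fun n =>
          ‖((α b : A) : Unitization ℂ A) -
            NormedSpace.exp
                (Complex.I • ((∑ k ∈ Finset.range n, t k • x k : A) : Unitization ℂ A)) *
              (b : Unitization ℂ A) *
              star (NormedSpace.exp
                (Complex.I • ((∑ k ∈ Finset.range n, t k • x k : A) : Unitization ℂ A)))‖)
        atTop (nhds 0) := by
  have hx_sa k : IsSelfAdjoint (x k) := .of_nonneg (hx_pos k)
  let u (s : ℕ → ℝ) (n : ℕ) : unitary (Unitization ℂ A) :=
    selfAdjoint.expUnitary ⟨(partialSum s x 0 n : A), (isSelfAdjoint_partialSum hx_sa 0 n).inr ℂ⟩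
  have hu_star (s : ℕ → ℝ) n : star (u s n) = u (-s) n := Subtype.ext <| by
    simp [u, star_exp_I_smul ((isSelfAdjoint_partialSum hx_sa 0 n).inr ℂ), partialSum_neg]
  have hconv (s : ℕ → ℝ) (hs : ∀ n, |s n| ≤ 1) (b : A) : ∃ c : A,
      Tendsto (fun n => conjStarAlgAut ℂ _ (u s n) b) atTop (𝓝 (c : Unitization ℂ A)) := by
    have hS m n : ‖partialSum s x m n‖ ≤ 1 :=
      norm_sum_smul_le_one_of_orthogonal x s _ hx_pos hx_norm hx_orth hs
    simpa [u] using exists_tendsto_conj_exp_partialSum hx_sa hx_orth hS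
      fun ε hε => exists_forall_norm_commutator_partialSum_lt a ha_dense hx_comm hs hS b hε
  obtain ⟨α, hα⟩ := exists_starAlgEquiv_tendsto_conj (u t) (hconv t ht)
    (by simpa only [hu_star] using hconv (-t) (by simpa using ht))
  refine ⟨α, fun b => ?_⟩
  refine (tendsto_iff_norm_sub_tendsto_zero.mp (hα b)).congr fun n => ?_
  rw [norm_sub_rev]
  simp only [conjStarAlgAut_apply, u, selfAdjoint.expUnitary_coe, partialSum,
    Finset.range_eq_Ico]

theorem stmt8 {A : Type*} [NonUnitalCStarAlgebra A] [PartialOrder A] [StarOrderedRing A]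
    (a : ℕ → A) (ha_norm : ∀ i, ‖a i‖ ≤ 1)
    (ha_dense : ∀ b : A, ‖b‖ ≤ 1 → ∀ ε > (0 : ℝ), ∃ i, ‖b - a i‖ < ε)
    (x : ℕ → A) (hx_pos : ∀ n, 0 ≤ x n) (hx_norm : ∀ n, ‖x n‖ ≤ 1)
    (hx_orth : ∀ m n, m ≠ n → x m * x n = 0)
    (hx_comm : ∀ n i, i ≤ n → ‖x n * a i - a i * x n‖ ≤ ((2 : ℝ) ^ n)⁻¹)
    (t : ℕ → ℝ) (ht : ∀ n, |t n| ≤ 1) :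
    ∃ α : A ≃⋆ₐ[ℂ] A, ∀ b : A,
      Tendsto (fun n =>
          ‖((α b : A) : Unitization ℂ A) -
            NormedSpace.exp
                (Complex.I • ((∑ k ∈ Finset.range n, t k • x k : A) : Unitization ℂ A)) *
              (b : Unitization ℂ A) *
              star (NormedSpace.exp
                (Complex.I • ((∑ k ∈ Finset.range n, t k • x k : A) : Unitization ℂ A)))‖)
        atTop (nhds 0) :=
  stmt8_general a ha_dense x hx_pos hx_norm hx_orth hx_comm t ht
end

section
/- Let A be a C*-algebra, let (a_i)_{i∈ℕ} be a sequence dense in the closed unit ball of A, and let (x_n)_{n∈ℕ} be a sequence of positive contractions in A with x_n x_m = 0 for n ≠ m and ‖x_n a_i − a_i x_n‖ ≤ 2^{−n} for i ≤ n. Let t, s : ℕ → [−1,1] satisfy ∑_n |t_n − s_n| < ∞. Then the series ∑_n (t_n − s_n) x_n converges in A to a selfadjoint element h. Moreover, if α and β are *-algebra automorphisms of A such that for every a ∈ A, ‖α(a) − exp(i∑_{k≤n} t_k x_k) a exp(−i∑_{k≤n} t_k x_k)‖ → 0 and ‖β(a) − exp(i∑_{k≤n} s_k x_k) a exp(−i∑_{k≤n}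 s_k x_k)‖ → 0 as n → ∞, then with u = exp(ih) (a unitary in the unitization Ã) one has α(a) = u β(a) u* for every a ∈ A. -/
/-!
Orthogonality makes the `x n` commute, hence the partial sums `∑_{k<n} t_k x_k` and
`∑_{k<n} s_k x_k` commute, and conjugation by `exp (i ∑_{k<n} t_k x_k)` is conjugation by
`exp (i ∑_{k<n} s_k x_k)` followed by conjugation by `exp (i ∑_{k<n} (t_k - s_k) x_k)`.
As `n → ∞` the first conjugation tends to `α`, the second to `β`, and the last unitary to
`exp (i h)` by continuity of `exp`.
-/

open Filter Topology NormedSpace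

lemma HasSum.isSelfAdjoint {ι α : Type*} [AddCommMonoid α] [TopologicalSpace α] [StarAddMonoid α]
    [ContinuousStar α] [T2Space α] {f : ι → α} {a : α} (hf : HasSum f a)
    (hfa : ∀ i, IsSelfAdjoint (f i)) : IsSelfAdjoint a :=
  hf.star.unique (by simpa only [(hfa _).star_eq] using hf)

lemma commute_of_mul_eq_zero_of_ne {ι M : Type*} [MulZeroClass M] {x : ι → M}
    (hx : ∀ i j, i ≠ j → x i * x j = 0) (i j : ι) : Commute (x i) (x j) := by
  rcases eq_or_ne i j with rfl | hij
  · exact .refl _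
  · exact (hx i j hij).trans (hx j i hij.symm).symm

lemma Finset.commute_sum_smul_sum_smul {ι R A : Type*} [CommSemiring R] [NonUnitalSemiring A]
    [Module R A] [IsScalarTower R A A] [SMulCommClass R A A] {x : ι → A}
    (hx : ∀ i j, Commute (x i) (x j)) (s : Finset ι) (c d : ι → R) :
    Commute (∑ k ∈ s, c k • x k) (∑ k ∈ s, d k • x k) :=
  .sum_left _ _ _ fun i _ => .sum_right _ _ _ fun j _ => ((hx i j).smul_left _).smul_right _

section ExpConjugation

variable {𝔸 : Type*} [NormedRing 𝔸] [NormedAlgebra ℚ 𝔸] [CompleteSpace 𝔸]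

lemma exp_mul_mul_exp_neg_of_commute {X Y : 𝔸} (hXY : Commute X Y) (z : 𝔸) :
    exp X * z * exp (-X) = exp (X - Y) * (exp Y * z * exp (-Y)) * exp (-(X - Y)) := by
  have hsplit : exp X = exp (X - Y) * exp Y := by
    rw [← exp_add_of_commute (hXY.sub_left (Commute.refl Y)), sub_add_cancel]
  have hsplit_neg : exp (-X) = exp (-Y) * exp (-(X - Y)) := by
    rw [← exp_add_of_commute (hXY.symm.sub_right (Commute.refl Y)).neg_left.neg_right]
    congr 1; abel
  rw [hsplit, hsplit_neg]
  simp only [mul_assoc]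

lemma eq_exp_mul_mul_exp_neg_of_tendsto {ι : Type*} {l : Filter ι} [l.NeBot] {X Y : ι → 𝔸}
    {H z p q : 𝔸} (hXY : ∀ n, Commute (X n) (Y n)) (hH : Tendsto (fun n => X n - Y n) l (𝓝 H))
    (hp : Tendsto (fun n => exp (X n) * z * exp (-X n)) l (𝓝 p))
    (hq : Tendsto (fun n => exp (Y n) * z * exp (-Y n)) l (𝓝 q)) :
    p = exp H * q * exp (-H) :=
  tendsto_nhds_unique hp <| ((hH.exp.mul hq).mul hH.neg.exp).congr fun n =>
    (exp_mul_mul_exp_neg_of_commute (hXY n) z).symm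

end ExpConjugation

lemma IsSelfAdjoint.star_exp_I_smul {𝔸 : Type*} [NormedRing 𝔸] [NormedAlgebra ℂ 𝔸] [StarRing 𝔸]
    [ContinuousStar 𝔸] [StarModule ℂ 𝔸] {a : 𝔸} (ha : IsSelfAdjoint a) :
    star (NormedSpace.exp (Complex.I • a)) = NormedSpace.exp (-(Complex.I • a)) := by
  rw [star_exp, star_smul, Complex.star_def, Complex.conj_I, ha.star_eq, neg_smul]

theorem stmt9_general {A : Type*} [NonUnitalCStarAlgebra A] [PartialOrder A] [StarOrderedRing A]
    (x : ℕ → A) (hx_pos : ∀ n, 0 ≤ x n) (hx_norm : ∀ n, ‖x n‖ ≤ 1)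
    (hx_orth : ∀ m n, m ≠ n → x m * x n = 0)
    (t s : ℕ → ℝ)
    (hts : Summable fun n => |t n - s n|) :
    ∃ h : A, HasSum (fun n => (t n - s n) • x n) h ∧ IsSelfAdjoint h ∧
      ∀ α β : A ≃⋆ₐ[ℂ] A,
        (∀ b : A,
          Tendsto (fun n =>
              ‖((α b : A) : Unitization ℂ A) -
                NormedSpace.exp
                    (Complex.I • ((∑ k ∈ Finset.range n, t k • x k : A) : Unitization ℂ A)) *
                  (b : Unitization ℂ A) *
                  NormedSpace.exp
                    (-(Complex.I • ((∑ k ∈ Finset.range n, t k • x k : A) : Unitization ℂ A)))‖)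
            atTop (nhds 0)) →
        (∀ b : A,
          Tendsto (fun n =>
              ‖((β b : A) : Unitization ℂ A) -
                NormedSpace.exp
                    (Complex.I • ((∑ k ∈ Finset.range n, s k • x k : A) : Unitization ℂ A)) *
                  (b : Unitization ℂ A) *
                  NormedSpace.exp
                    (-(Complex.I • ((∑ k ∈ Finset.range n, s k • x k : A) : Unitization ℂ A)))‖)
            atTop (nhds 0)) →
        ∀ b : A,
          ((α b : A) : Unitization ℂ A) =
            NormedSpace.exp (Complex.I • (h : Unitization ℂ A)) *
              ((β b : A) : Unitization ℂ A) *
              star (NormedSpace.exp (Complex.I • (h : Unitization ℂ A))) := by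
  let +nondep : NormedAlgebra ℚ (Unitization ℂ A) := .restrictScalars ℚ ℂ (Unitization ℂ A)
  obtain ⟨h, hsum⟩ : Summable fun n => (t n - s n) • x n :=
    hts.of_norm_bounded fun n => by
      rw [norm_smul, Real.norm_eq_abs]
      exact mul_le_of_le_one_right (abs_nonneg _) (hx_norm n)
  have hsa := hsum.isSelfAdjoint fun n =>
    (IsSelfAdjoint.all (t n - s n)).smul (IsSelfAdjoint.of_nonneg (hx_pos n))
  refine ⟨_, hsum, hsa, fun α β hα hβ b => ?_⟩
  have hpartial : Tendsto (fun n => Complex.I • ((∑ k ∈ Finset.range n, t k • x k : A) :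
      Unitization ℂ A) - Complex.I • ((∑ k ∈ Finset.range n, s k • x k : A) : Unitization ℂ A))
      atTop (𝓝 (Complex.I • (h : Unitization ℂ A))) := by
    refine ((Unitization.continuous_inr.tendsto _).comp hsum.tendsto_sum_nat).const_smul
      Complex.I |>.congr fun n => ?_
    simp only [Function.comp_apply, ← smul_sub, ← Unitization.inr_sub, ← Finset.sum_sub_distrib,
      sub_smul]
  have hsa_inr : IsSelfAdjoint (h : Unitization ℂ A) :=
    hsa.map (Unitization.inrNonUnitalStarAlgHom ℂ A)
  rw [hsa_inr.star_exp_I_smul]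
  refine eq_exp_mul_mul_exp_neg_of_tendsto (fun n => ?_) hpartial
    (tendsto_iff_norm_sub_tendsto_zero.2 (by simpa only [norm_sub_rev] using hα b))
    (tendsto_iff_norm_sub_tendsto_zero.2 (by simpa only [norm_sub_rev] using hβ b))
  have hcomm :=
    (Finset.range n).commute_sum_smul_sum_smul (commute_of_mul_eq_zero_of_ne hx_orth) t s
  exact ((hcomm.map (Unitization.inrNonUnitalAlgHom ℂ A)).smul_left _).smul_right _

theorem stmt9 {A : Type*} [NonUnitalCStarAlgebra A] [PartialOrder A] [StarOrderedRing A]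
    (a : ℕ → A) (ha_norm : ∀ i, ‖a i‖ ≤ 1)
    (ha_dense : ∀ b : A, ‖b‖ ≤ 1 → ∀ ε > (0 : ℝ), ∃ i, ‖b - a i‖ < ε)
    (x : ℕ → A) (hx_pos : ∀ n, 0 ≤ x n) (hx_norm : ∀ n, ‖x n‖ ≤ 1)
    (hx_orth : ∀ m n, m ≠ n → x m * x n = 0)
    (hx_comm : ∀ n i, i ≤ n → ‖x n * a i - a i * x n‖ ≤ ((2 : ℝ) ^ n)⁻¹)
    (t s : ℕ → ℝ) (ht : ∀ n, |t n| ≤ 1) (hs : ∀ n, |s n| ≤ 1)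
    (hts : Summable fun n => |t n - s n|) :
    ∃ h : A, HasSum (fun n => (t n - s n) • x n) h ∧ IsSelfAdjoint h ∧
      ∀ α β : A ≃⋆ₐ[ℂ] A,
        (∀ b : A,
          Tendsto (fun n =>
              ‖((α b : A) : Unitization ℂ A) -
                NormedSpace.exp
                    (Complex.I • ((∑ k ∈ Finset.range n, t k • x k : A) : Unitization ℂ A)) *
                  (b : Unitization ℂ A) *
                  NormedSpace.exp
                    (-(Complex.I • ((∑ k ∈ Finset.range n, t k • x k : A) : Unitization ℂ A)))‖)
            atTop (nhds 0)) →
        (∀ b : A,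
          Tendsto (fun n =>
              ‖((β b : A) : Unitization ℂ A) -
                NormedSpace.exp
                    (Complex.I • ((∑ k ∈ Finset.range n, s k • x k : A) : Unitization ℂ A)) *
                  (b : Unitization ℂ A) *
                  NormedSpace.exp
                    (-(Complex.I • ((∑ k ∈ Finset.range n, s k • x k : A) : Unitization ℂ A)))‖)
            atTop (nhds 0)) →
        ∀ b : A,
          ((α b : A) : Unitization ℂ A) =
            NormedSpace.exp (Complex.I • (h : Unitization ℂ A)) *
              ((β b : A) : Unitization ℂ A) *
              star (NormedSpace.exp (Complex.I • (h : Unitization ℂ A))) :=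
  stmt9_general x hx_pos hx_norm hx_orth t s hts
end

section
/- Let A be a C*-algebra, let (x_n)_{n∈ℕ} be a central sequence of selfadjoint contractions in A, and let f : ℝ → ℝ be a continuous function with f(0) = 0. Then the sequence (f(x_n))_{n∈ℕ}, obtained by applying the continuous functional calculus, is a central sequence in A. Moreover, if (x_n) is hypercentral, then (f(x_n)) is hypercentral. -/
open Filter Topology

/-- A central sequence: bounded and asymptotically commuting with every element. -/
def IsCentralSeq {A : Type*} [NonUnitalCStarAlgebra A] (x : ℕ → A) : Prop :=
  (∃ M : ℝ, ∀ n, ‖x n‖ ≤ M) ∧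
    ∀ a : A, Tendsto (fun n => ‖x n * a - a * x n‖) atTop (nhds 0)

/-- A hypercentral sequence: central, and its commutators with any central sequence
converge strictly to `0`. -/
def IsHypercentralSeq {A : Type*} [NonUnitalCStarAlgebra A] (x : ℕ → A) : Prop :=
  IsCentralSeq x ∧
    ∀ y : ℕ → A, IsCentralSeq y → ∀ a : A,
      Tendsto (fun n => ‖a * (x n * y n - y n * x n)‖) atTop (nhds 0) ∧
      Tendsto (fun n => ‖(x n * y n - y n * x n) * a‖) atTop (nhds 0)

open Polynomial

/-! Centrality and hypercentrality of `(zₙ)` both amount to boundedness together with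
`‖φₙ zₙ‖ → 0` for suitable uniformly bounded linear maps `φₙ` (`z ↦ [z, a]`, `z ↦ a [z, yₙ]`,
`z ↦ [z, yₙ] a`). Both properties pass to products of commuting sequences, hence to the powers
`xₙ ^ (k + 1)` and to `q(xₙ)` for polynomials with `q(0) = 0`. Weierstrass approximation of `f`
on `[-R, R]` by such `q` then gives `‖f(xₙ) - q(xₙ)‖ ≤ ε` uniformly in `n`, since the
quasispectra of the `xₙ` lie in `[-R, R]`. -/

theorem tendsto_zero_of_forall_le_add {v : ℕ → ℝ} (hv : ∀ n, 0 ≤ v n)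
    (h : ∀ ε > 0, ∃ u : ℕ → ℝ, Tendsto u atTop (𝓝 0) ∧ ∀ n, v n ≤ u n + ε) :
    Tendsto v atTop (𝓝 0) := by
  rw [Metric.tendsto_atTop]
  intro ε hε
  obtain ⟨u, hu, hvu⟩ := h (ε / 2) (half_pos hε)
  obtain ⟨N, hN⟩ := Metric.tendsto_atTop.1 hu (ε / 2) (half_pos hε)
  refine ⟨N, fun n hn => ?_⟩
  have hun := hN n hn
  rw [Real.dist_eq, sub_zero] at hun ⊢
  rw [abs_of_nonneg (hv n)]
  linarith [hvu n, (abs_lt.1 hun).2]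

theorem exists_polynomial_near_of_map_zero {a b : ℝ} (h0 : (0 : ℝ) ∈ Set.Icc a b) {f : ℝ → ℝ}
    (hf : ContinuousOn f (Set.Icc a b)) (hf0 : f 0 = 0) {ε : ℝ} (hε : 0 < ε) :
    ∃ q : ℝ[X], q.coeff 0 = 0 ∧ ∀ t ∈ Set.Icc a b, |q.eval t - f t| < ε := by
  obtain ⟨p, hp⟩ := exists_polynomial_near_of_continuousOn a b f hf (ε / 2) (half_pos hε)
  refine ⟨p - C (p.eval 0), by simp [coeff_zero_eq_eval_zero], fun t ht => ?_⟩
  have hpt := hp t ht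
  have hp0 := hp 0 h0
  rw [hf0, sub_zero] at hp0
  rw [eval_sub, eval_C]
  calc |p.eval t - p.eval 0 - f t| ≤ |p.eval t - f t| + |p.eval 0| := by
        rw [sub_right_comm]; exact abs_sub _ _
    _ < ε / 2 + ε / 2 := add_lt_add hpt hp0
    _ = ε := add_halves ε

section

variable {A : Type*} [NonUnitalCStarAlgebra A]

noncomputable def commutatorₗ (b : A) : A →ₗ[ℝ] A :=
  LinearMap.mulRight ℝ b - LinearMap.mulLeft ℝ b

theorem commutatorₗ_apply (b z : A) : commutatorₗ b z = z * b - b * z := rfl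

theorem norm_commutatorₗ_apply_le (b z : A) : ‖commutatorₗ b z‖ ≤ 2 * ‖b‖ * ‖z‖ := by
  rw [commutatorₗ_apply]
  calc ‖z * b - b * z‖ ≤ ‖z‖ * ‖b‖ + ‖b‖ * ‖z‖ :=
        (norm_sub_le _ _).trans (add_le_add (norm_mul_le _ _) (norm_mul_le _ _))
    _ = 2 * ‖b‖ * ‖z‖ := by ring

theorem IsCentralSeq.mul {x y : ℕ → A} (hx : IsCentralSeq x) (hy : IsCentralSeq y) :
    IsCentralSeq fun n => x n * y n := by
  obtain ⟨M, hM⟩ := hx.1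
  obtain ⟨N, hN⟩ := hy.1
  refine ⟨⟨M * N, fun n => norm_mul_le_of_le (hM n) (hN n)⟩, fun a => ?_⟩
  have key : ∀ n, ‖x n * y n * a - a * (x n * y n)‖ ≤
      M * ‖y n * a - a * y n‖ + ‖x n * a - a * x n‖ * N := fun n => by
    have hid : x n * y n * a - a * (x n * y n) =
        x n * (y n * a - a * y n) + (x n * a - a * x n) * y n := by noncomm_ring
    rw [hid]
    exact (norm_add_le _ _).trans <| add_le_add
      (norm_mul_le_of_le (hM n) le_rfl) (norm_mul_le_of_le le_rfl (hN n))
  have lim := ((hy.2 a).const_mul M).add ((hx.2 a).mul_const N)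
  exact squeeze_zero (fun n => norm_nonneg _) key (by simpa using lim)

theorem IsHypercentralSeq.mul_of_commute {u v : ℕ → A} (hu : IsHypercentralSeq u)
    (hv : IsHypercentralSeq v) (huv : ∀ n, Commute (u n) (v n)) :
    IsHypercentralSeq fun n => u n * v n := by
  refine ⟨hu.1.mul hv.1, fun w hw a => ?_⟩
  obtain ⟨M, hM⟩ := hv.1.1
  constructor
  · have key : ∀ n, ‖a * (u n * v n * w n - w n * (u n * v n))‖ ≤
        ‖a * (v n * (u n * w n) - u n * w n * v n)‖ + ‖a * (u n * w n - w n * u n)‖ * M :=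
      fun n => by
        have hid : a * (u n * v n * w n - w n * (u n * v n)) =
            a * (v n * (u n * w n) - u n * w n * v n) + a * (u n * w n - w n * u n) * v n := by
          nth_rw 1 [(huv n).eq]; noncomm_ring
        rw [hid]
        exact (norm_add_le _ _).trans (add_le_add le_rfl (norm_mul_le_of_le le_rfl (hM n)))
    have lim := (hv.2 _ (hu.1.mul hw) a).1.add ((hu.2 w hw a).1.mul_const M)
    exact squeeze_zero (fun n => norm_nonneg _) key (by simpa using lim)
  · have key : ∀ n, ‖(u n * v n * w n - w n * (u n * v n)) * a‖ ≤
        M * ‖(u n * w n - w n * u n) * a‖ + ‖(v n * (w n * u n) - w n * u n * v n) * a‖ :=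
      fun n => by
        have hid : (u n * v n * w n - w n * (u n * v n)) * a =
            v n * ((u n * w n - w n * u n) * a) + (v n * (w n * u n) - w n * u n * v n) * a := by
          nth_rw 1 [(huv n).eq]; noncomm_ring
        rw [hid]
        exact (norm_add_le _ _).trans (add_le_add (norm_mul_le_of_le (hM n) le_rfl) le_rfl)
    have lim := ((hu.2 w hw a).2.const_mul M).add (hv.2 _ (hw.mul hu.1) a).2
    exact squeeze_zero (fun n => norm_nonneg _) key (by simpa using lim)

theorem cfcₙ_eval_eq_sum (x : A) {q : ℝ[X]} (hq : q.coeff 0 = 0) :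
    cfcₙ q.eval x =
      ∑ k ∈ Finset.range q.natDegree, q.coeff (k + 1) • cfcₙ (· ^ (k + 1) : ℝ → ℝ) x := by
  have hq' : q.eval =
      ∑ k ∈ Finset.range q.natDegree, fun t : ℝ => q.coeff (k + 1) * t ^ (k + 1) := by
    ext t
    rw [Finset.sum_apply, eval_eq_sum_range, Finset.sum_range_succ']
    simp [hq]
  rw [hq', cfcₙ_sum _ x _ (fun _ _ => by fun_prop) (fun _ _ => by simp)]
  exact Finset.sum_congr rfl fun k _ => cfcₙ_const_mul _ _ x

theorem IsSelfAdjoint.quasispectrum_subset_Icc {x : A} (hx : IsSelfAdjoint x) {R : ℝ}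
    (hR : ‖x‖ ≤ R) : quasispectrum ℝ x ⊆ Set.Icc (-R) R := fun t ht => by
  have ht' : |t| ≤ ‖x‖ := by
    simpa [cfcₙ_id' ℝ x] using norm_apply_le_norm_cfcₙ (fun s : ℝ => s) x ht
  exact abs_le.1 (ht'.trans hR)

theorem IsSelfAdjoint.cfcₙ_pow_succ_succ {x : A} (hx : IsSelfAdjoint x) (k : ℕ) :
    cfcₙ (· ^ (k + 2) : ℝ → ℝ) x = cfcₙ (· ^ (k + 1) : ℝ → ℝ) x * x := by
  have h := cfcₙ_mul (fun t : ℝ => t ^ (k + 1)) (fun t => t) x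
  rw [cfcₙ_id' ℝ x] at h
  rw [← h]
  simp only [pow_succ]

theorem IsCentralSeq.cfcₙ_pow_succ {x : ℕ → A} (hsa : ∀ n, IsSelfAdjoint (x n))
    (hx : IsCentralSeq x) (k : ℕ) :
    IsCentralSeq fun n => cfcₙ (· ^ (k + 1) : ℝ → ℝ) (x n) := by
  induction k with
  | zero => simpa only [zero_add, pow_one, fun n => cfcₙ_id' ℝ (x n) (hsa n)] using hx
  | succ k ih => simpa only [(hsa _).cfcₙ_pow_succ_succ] using ih.mul hx

theorem IsHypercentralSeq.cfcₙ_pow_succ {x : ℕ → A} (hsa : ∀ n, IsSelfAdjoint (x n))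
    (hx : IsHypercentralSeq x) (k : ℕ) :
    IsHypercentralSeq fun n => cfcₙ (· ^ (k + 1) : ℝ → ℝ) (x n) := by
  induction k with
  | zero => simpa only [zero_add, pow_one, fun n => cfcₙ_id' ℝ (x n) (hsa n)] using hx
  | succ k ih =>
    simpa only [(hsa _).cfcₙ_pow_succ_succ] using
      ih.mul_of_commute hx fun n => (hsa n).commute_cfcₙ (Commute.refl _) _

section Approximation

variable {x : ℕ → A} {φ : ℕ → A →ₗ[ℝ] A} {K : ℝ}

theorem tendsto_norm_map_cfcₙ_eval
    (hpow : ∀ k : ℕ, Tendsto (fun n => ‖φ n (cfcₙ (· ^ (k + 1) : ℝ → ℝ) (x n))‖) atTop (𝓝 0))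
    {q : ℝ[X]} (hq : q.coeff 0 = 0) :
    Tendsto (fun n => ‖φ n (cfcₙ q.eval (x n))‖) atTop (𝓝 0) := by
  have hle : ∀ n, ‖φ n (cfcₙ q.eval (x n))‖ ≤ ∑ k ∈ Finset.range q.natDegree,
      |q.coeff (k + 1)| * ‖φ n (cfcₙ (· ^ (k + 1) : ℝ → ℝ) (x n))‖ := fun n => by
    rw [cfcₙ_eval_eq_sum _ hq, map_sum]
    refine (norm_sum_le _ _).trans_eq (Finset.sum_congr rfl fun k _ => ?_)
    rw [map_smul, norm_smul, Real.norm_eq_abs]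
  have lim := tendsto_finsetSum (Finset.range q.natDegree) fun k _ =>
    (hpow k).const_mul |q.coeff (k + 1)|
  exact squeeze_zero (fun n => norm_nonneg _) hle (by simpa using lim)

theorem tendsto_norm_map_cfcₙ (hsa : ∀ n, IsSelfAdjoint (x n)) {R : ℝ} (hR : ∀ n, ‖x n‖ ≤ R)
    (hφ : ∀ n z, ‖φ n z‖ ≤ K * ‖z‖)
    (hpow : ∀ k : ℕ, Tendsto (fun n => ‖φ n (cfcₙ (· ^ (k + 1) : ℝ → ℝ) (x n))‖) atTop (𝓝 0))
    {f : ℝ → ℝ} (hf : Continuous f) (hf0 : f 0 = 0) :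
    Tendsto (fun n => ‖φ n (cfcₙ f (x n))‖) atTop (𝓝 0) := by
  refine tendsto_zero_of_forall_le_add (fun n => norm_nonneg _) fun ε hε => ?_
  have hR0 : 0 ≤ R := (norm_nonneg _).trans (hR 0)
  set δ := ε / (|K| + 1)
  obtain ⟨q, hq0, hq⟩ := exists_polynomial_near_of_map_zero (a := -R) (b := R)
    ⟨neg_nonpos.2 hR0, hR0⟩ hf.continuousOn hf0 (show 0 < δ by positivity)
  refine ⟨fun n => ‖φ n (cfcₙ q.eval (x n))‖, tendsto_norm_map_cfcₙ_eval hpow hq0, fun n => ?_⟩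
  have hdiff : ‖cfcₙ f (x n) - cfcₙ q.eval (x n)‖ ≤ δ := by
    rw [← cfcₙ_sub f q.eval (x n) hf.continuousOn hf0 (by fun_prop)
      (by rw [← coeff_zero_eq_eval_zero, hq0])]
    refine norm_cfcₙ_le fun t ht => ?_
    rw [Real.norm_eq_abs, abs_sub_comm]
    exact (hq t ((hsa n).quasispectrum_subset_Icc (hR n) ht)).le
  calc ‖φ n (cfcₙ f (x n))‖
      ≤ ‖φ n (cfcₙ q.eval (x n))‖ + ‖φ n (cfcₙ f (x n) - cfcₙ q.eval (x n))‖ := by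
        rw [map_sub]; exact norm_le_insert' _ _
    _ ≤ ‖φ n (cfcₙ q.eval (x n))‖ + |K| * δ := by
        gcongr
        exact (hφ n _).trans (mul_le_mul (le_abs_self K) hdiff (norm_nonneg _) (abs_nonneg K))
    _ ≤ ‖φ n (cfcₙ q.eval (x n))‖ + ε := by
        gcongr
        rw [mul_div_assoc', div_le_iff₀ (by positivity)]
        nlinarith [abs_nonneg K]

end Approximation

theorem isCentralSeq_cfcₙ {x : ℕ → A} (hsa : ∀ n, IsSelfAdjoint (x n)) {R : ℝ}
    (hR : ∀ n, ‖x n‖ ≤ R) (hx : IsCentralSeq x) {f : ℝ → ℝ} (hf : Continuous f)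
    (hf0 : f 0 = 0) : IsCentralSeq fun n => cfcₙ f (x n) := by
  refine ⟨?_, fun a => ?_⟩
  · obtain ⟨C, hC⟩ :=
      isCompact_Icc.exists_bound_of_continuousOn (hf.continuousOn (s := Set.Icc (-R) R))
    exact ⟨C, fun n => norm_cfcₙ_le fun t ht => hC t ((hsa n).quasispectrum_subset_Icc (hR n) ht)⟩
  · exact tendsto_norm_map_cfcₙ (φ := fun _ => commutatorₗ a) hsa hR
      (fun _ => norm_commutatorₗ_apply_le a) (fun k => (hx.cfcₙ_pow_succ hsa k).2 a) hf hf0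

theorem isHypercentralSeq_cfcₙ {x : ℕ → A} (hsa : ∀ n, IsSelfAdjoint (x n)) {R : ℝ}
    (hR : ∀ n, ‖x n‖ ≤ R) (hx : IsHypercentralSeq x) {f : ℝ → ℝ} (hf : Continuous f)
    (hf0 : f 0 = 0) : IsHypercentralSeq fun n => cfcₙ f (x n) := by
  refine ⟨isCentralSeq_cfcₙ hsa hR hx.1 hf hf0, fun y hy a => ?_⟩
  obtain ⟨M, hM⟩ := hy.1
  have hcomm : ∀ n z, ‖commutatorₗ (y n) z‖ ≤ 2 * M * ‖z‖ := fun n z =>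
    (norm_commutatorₗ_apply_le _ z).trans (by gcongr; exact hM n)
  constructor
  · exact tendsto_norm_map_cfcₙ (φ := fun n => LinearMap.mulLeft ℝ a ∘ₗ commutatorₗ (y n))
      (K := ‖a‖ * (2 * M)) hsa hR
      (fun n z => (norm_mul_le_of_le le_rfl (hcomm n z)).trans_eq (mul_assoc _ _ _).symm)
      (fun k => ((hx.cfcₙ_pow_succ hsa k).2 y hy a).1) hf hf0
  · exact tendsto_norm_map_cfcₙ (φ := fun n => LinearMap.mulRight ℝ a ∘ₗ commutatorₗ (y n))
      (K := 2 * M * ‖a‖) hsa hR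
      (fun n z => (norm_mul_le_of_le (hcomm n z) le_rfl).trans_eq (mul_right_comm _ _ _))
      (fun k => ((hx.cfcₙ_pow_succ hsa k).2 y hy a).2) hf hf0

end

theorem stmt13_general {A : Type*} [NonUnitalCStarAlgebra A]
    (x : ℕ → A) (hsa : ∀ n, IsSelfAdjoint (x n)) (hnorm : ∀ n, ‖x n‖ ≤ 1)
    (hc : IsCentralSeq x)
    (f : ℝ → ℝ) (hf : Continuous f) (hf0 : f 0 = 0) :
    IsCentralSeq (fun n => cfcₙ f (x n)) ∧
      (IsHypercentralSeq x → IsHypercentralSeq fun n => cfcₙ f (x n)) :=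
  ⟨isCentralSeq_cfcₙ hsa hnorm hc hf hf0, fun hx => isHypercentralSeq_cfcₙ hsa hnorm hx hf hf0⟩

theorem stmt13 {A : Type*} [NonUnitalCStarAlgebra A] [PartialOrder A] [StarOrderedRing A]
    (x : ℕ → A) (hsa : ∀ n, IsSelfAdjoint (x n)) (hnorm : ∀ n, ‖x n‖ ≤ 1)
    (hc : IsCentralSeq x)
    (f : ℝ → ℝ) (hf : Continuous f) (hf0 : f 0 = 0) :
    IsCentralSeq (fun n => cfcₙ f (x n)) ∧
      (IsHypercentralSeq x → IsHypercentralSeq fun n => cfcₙ f (x n)) :=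
  stmt13_general x hsa hnorm hc f hf hf0
end
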